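/- Let X be a real Hilbert space, M ⊆ X a nonempty closed convex set, J : X → ℝ Fréchet differentiable, x† ∈ M, γ > 0, η ≥ 0 and τ > 1/γ. Assume the combined convexity/stationarity condition ⟨∇J(x), x − x†⟩ ≥ γ‖∇J(x)‖² − η for all x ∈ M. Let x_k ∈ M satisfy ‖∇J(x_k)‖² ≥ τη. Then (γτ − 1)η ≤ ⟨∇J(x_k), x_k − x†⟩ and (1 + 1/(γτ − 1))⟨∇J(x_k), x_k − x†⟩ ≥ γ‖∇J(x_k)‖². Moreover, if 0 < μ_k ≤ 2γ/(1 + 1/(γτ − 1)) and x_{k+1} = P_M(x_k − μ_k ∇J(x_k)), then ‖x_{k+1} − x†‖² − ‖x_k − x†‖² ≤ −μ_k(2γ/(1 + 1/(γτ − 1)) − μ_k)‖∇J(x_k)‖² ≤ 0. -/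

import Mathlib

/-! The combined condition at `x_k`, together with `‖∇J(x_k)‖² ≥ τη`, bounds `η` by
`⟪∇J(x_k), x_k - x†⟫ / (γτ - 1)`, so `⟪∇J(x_k), x_k - x†⟫ ≥ κ‖∇J(x_k)‖²` with
`κ = γ / (1 + 1/(γτ - 1))`. Since `x†` lies in `M`, the variational inequality of the
projection makes `x_{k+1}` at least as close to `x†` as the unprojected gradient step, and
expanding `‖x_k - μ∇J(x_k) - x†‖²` with this lower bound gives the decrease
`μ(2κ - μ)‖∇J(x_k)‖²`. -/

open RealInnerProductSpace

section Scalar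

variable {γ η τ p G : ℝ}

theorem combined_condition_margin_le (hγ : 0 < γ) (hp : γ * G - η ≤ p) (hG : τ * η ≤ G) :
    (γ * τ - 1) * η ≤ p := by
  nlinarith

theorem combined_condition_scaled_ge (hγτ : 1 < γ * τ) (hmargin : (γ * τ - 1) * η ≤ p)
    (hp : γ * G - η ≤ p) : γ * G ≤ (1 + 1 / (γ * τ - 1)) * p := by
  have hpos : 0 < γ * τ - 1 := by linarith
  have hη : η ≤ p / (γ * τ - 1) := (le_div_iff₀ hpos).2 (by linarith)
  calc γ * G ≤ p + p / (γ * τ - 1) := by linarith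
    _ = (1 + 1 / (γ * τ - 1)) * p := by ring

theorem two_mul_div_mul_le_two_mul {c : ℝ} (hc : 0 < c) (h : γ * G ≤ c * p) :
    2 * γ / c * G ≤ 2 * p := by
  rw [div_mul_eq_mul_div, div_le_iff₀ hc]
  linarith

end Scalar

section ProjectedStep

variable {X : Type*} [NormedAddCommGroup X] [InnerProductSpace ℝ X]

theorem norm_sub_sq_le_of_inner_sub_nonpos {y x₁ z : X} (h : ⟪y - x₁, z - x₁⟫ ≤ 0) :
    ‖x₁ - z‖ ^ 2 ≤ ‖y - z‖ ^ 2 := by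
  have hsplit : ‖y - z‖ ^ 2 = ‖y - x₁‖ ^ 2 - 2 * ⟪y - x₁, z - x₁⟫ + ‖z - x₁‖ ^ 2 := by
    rw [← norm_sub_sq_real]
    congr 2
    abel
  rw [hsplit, norm_sub_rev z]
  nlinarith [sq_nonneg ‖y - x₁‖]

theorem norm_sub_smul_sub_sq (x g z : X) (μ : ℝ) :
    ‖(x - μ • g) - z‖ ^ 2 = ‖x - z‖ ^ 2 - 2 * μ * ⟪g, x - z⟫ + μ ^ 2 * ‖g‖ ^ 2 := by
  rw [sub_right_comm, norm_sub_sq_real, real_inner_smul_right, norm_smul, real_inner_comm,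
    mul_pow, Real.norm_eq_abs, sq_abs]
  ring

theorem norm_projected_step_sub_sq_sub_le {x g z x₁ : X} {μ a : ℝ} (hμ : 0 ≤ μ)
    (hg : a * ‖g‖ ^ 2 ≤ 2 * ⟪g, x - z⟫) (hproj : ⟪(x - μ • g) - x₁, z - x₁⟫ ≤ 0) :
    ‖x₁ - z‖ ^ 2 - ‖x - z‖ ^ 2 ≤ -μ * (a - μ) * ‖g‖ ^ 2 := by
  have hclose := norm_sub_sq_le_of_inner_sub_nonpos hproj
  rw [norm_sub_smul_sub_sq] at hclose
  nlinarith [mul_le_mul_of_nonneg_left hg hμ]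

end ProjectedStep

theorem projected_gradient_combined_condition_estimates_general
    {X : Type*} [NormedAddCommGroup X] [InnerProductSpace ℝ X] [CompleteSpace X]
    (M : Set X)
    (J : X → ℝ)
    (xdag : X) (hxdag : xdag ∈ M)
    (γ η τ : ℝ) (hγ : 0 < γ) (hτ : 1 / γ < τ)
    (hcombined : ∀ x ∈ M,
      ⟪gradient J x, x - xdag⟫ ≥ γ * ‖gradient J x‖ ^ 2 - η)
    (xk : X) (hxk : xk ∈ M)
    (hdisc : ‖gradient J xk‖ ^ 2 ≥ τ * η) :
    (γ * τ - 1) * η ≤ ⟪gradient J xk, xk - xdag⟫ ∧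
      (1 + 1 / (γ * τ - 1)) * ⟪gradient J xk, xk - xdag⟫ ≥
        γ * ‖gradient J xk‖ ^ 2 ∧
      ∀ μ : ℝ, 0 < μ → μ ≤ 2 * γ / (1 + 1 / (γ * τ - 1)) →
        ∀ x1 ∈ M,
          (∀ z ∈ M, ⟪(xk - μ • gradient J xk) - x1, z - x1⟫ ≤ 0) →
          ‖x1 - xdag‖ ^ 2 - ‖xk - xdag‖ ^ 2 ≤
              -μ * (2 * γ / (1 + 1 / (γ * τ - 1)) - μ) * ‖gradient J xk‖ ^ 2 ∧
            -μ * (2 * γ / (1 + 1 / (γ * τ - 1)) - μ) * ‖gradient J xk‖ ^ 2 ≤ 0 := by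
  have hγτ : 1 < γ * τ := by rwa [div_lt_iff₀ hγ, mul_comm] at hτ
  have hp := hcombined xk hxk
  have hmargin := combined_condition_margin_le hγ hp hdisc
  have hscaled := combined_condition_scaled_ge hγτ hmargin hp
  have hc : 0 < 1 + 1 / (γ * τ - 1) := by
    have : 0 < γ * τ - 1 := by linarith
    positivity
  refine ⟨hmargin, hscaled, fun μ hμ hμc x1 _ hproj => ⟨?_, ?_⟩⟩
  · exact norm_projected_step_sub_sq_sub_le hμ.le (two_mul_div_mul_le_two_mul hc hscaled)
      (hproj xdag hxdag)
  · have := sub_nonneg.2 hμc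
    have : 0 ≤ μ * (2 * γ / (1 + 1 / (γ * τ - 1)) - μ) * ‖gradient J xk‖ ^ 2 := by positivity
    linarith

/-- Estimates under the combined convexity/stationarity condition
`⟪∇J(x), x - x†⟫ ≥ γ‖∇J(x)‖² - η` on `M`: before the stopping criterion,
`(γτ - 1)η ≤ ⟪∇J(x_k), x_k - x†⟫`,
`(1 + 1/(γτ - 1))⟪∇J(x_k), x_k - x†⟫ ≥ γ‖∇J(x_k)‖²`, and the error decreases
in one projected gradient step. -/
theorem projected_gradient_combined_condition_estimates
    {X : Type*} [NormedAddCommGroup X] [InnerProductSpace ℝ X] [CompleteSpace X]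
    (M : Set X) (hMne : M.Nonempty) (hMcl : IsClosed M) (hMconv : Convex ℝ M)
    (J : X → ℝ) (hJ : Differentiable ℝ J)
    (xdag : X) (hxdag : xdag ∈ M)
    (γ η τ : ℝ) (hγ : 0 < γ) (hη : 0 ≤ η) (hτ : 1 / γ < τ)
    (hcombined : ∀ x ∈ M,
      ⟪gradient J x, x - xdag⟫ ≥ γ * ‖gradient J x‖ ^ 2 - η)
    (xk : X) (hxk : xk ∈ M)
    (hdisc : ‖gradient J xk‖ ^ 2 ≥ τ * η) :
    (γ * τ - 1) * η ≤ ⟪gradient J xk, xk - xdag⟫ ∧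
      (1 + 1 / (γ * τ - 1)) * ⟪gradient J xk, xk - xdag⟫ ≥
        γ * ‖gradient J xk‖ ^ 2 ∧
      ∀ μ : ℝ, 0 < μ → μ ≤ 2 * γ / (1 + 1 / (γ * τ - 1)) →
        ∀ x1 ∈ M,
          (∀ z ∈ M, ⟪(xk - μ • gradient J xk) - x1, z - x1⟫ ≤ 0) →
          ‖x1 - xdag‖ ^ 2 - ‖xk - xdag‖ ^ 2 ≤
              -μ * (2 * γ / (1 + 1 / (γ * τ - 1)) - μ) * ‖gradient J xk‖ ^ 2 ∧
            -μ * (2 * γ / (1 + 1 / (γ * τ - 1)) - μ) * ‖gradient J xk‖ ^ 2 ≤ 0 :=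
  projected_gradient_combined_condition_estimates_general M J xdag hxdag γ η τ hγ hτ hcombined xk
    hxk hdisc
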